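/- arXiv:1705.08163 — 8 statements merged into one kernel-verified Lean document; each statement's English description precedes it below -/
import Mathlib

section
/- Let f : [0,∞) → ℝ be continuous with f(0) ≥ 0. Define a(t) = max(0, max_{s ≤ t} (−f(s))) and x(t) = a(t) + f(t). Then (a, x) is a Skorokhod decomposition of f: a is continuous, nondecreasing, a(0) = 0, x is continuous, nonnegative, x(0) = f(0), and a is locally constant on the open set {t : x(t) > 0}. -/
open Set Filter MeasureTheory

/-- An admissible pair `(b, y)` for a continuous `f : [0,∞) → ℝ` with `f 0 ≥ 0`:
`b` continuous nondecreasing, `y` continuous nonnegative, `y = b + f`, `y 0 = f 0`. -/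
def AdmissiblePair (f b y : ℝ → ℝ) : Prop :=
  ContinuousOn b (Set.Ici 0) ∧ ContinuousOn y (Set.Ici 0) ∧
  MonotoneOn b (Set.Ici 0) ∧ (∀ t ∈ Set.Ici (0:ℝ), 0 ≤ y t) ∧
  (∀ t ∈ Set.Ici (0:ℝ), y t = b t + f t) ∧ y 0 = f 0

/-- A Skorokhod decomposition `(a, x)` of `f`: an admissible pair with `a`
locally constant on `{t : x t > 0}`. -/
def SkorokhodDecomp (f a x : ℝ → ℝ) : Prop :=
  AdmissiblePair f a x ∧
  ∀ t ∈ Set.Ici (0:ℝ), 0 < x t → ∀ᶠ s in nhdsWithin t (Set.Ici 0), a s = a t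

/-- An approximate `(β, υ)` decomposition of `f`: an admissible pair `(b, y)`
such that whenever `y ≥ υ` on `[s, u]`, `b u - b s ≤ β (u - s)`. -/
def ApproxDecomp (β υ : ℝ) (f b y : ℝ → ℝ) : Prop :=
  AdmissiblePair f b y ∧
  ∀ s u : ℝ, 0 ≤ s → s ≤ u → (∀ t ∈ Set.Icc s u, υ ≤ y t) → b u - b s ≤ β * (u - s)

/-! The running supremum `M t = sup_{[0,t]} g` of a continuous `g` is continuous: reparametrising
`[0,t]` by `[0,1]` makes it the supremum of a jointly continuous function over a fixed compact set.
Where `g t < M t`, continuity keeps `g` below `M t` near `t`, and `M u = max (M s) (sup_{[s,u]} g)`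
shows that `M` is constant there. With `g = -f` this gives the local constancy of `a = max 0 M`
where `x > 0`; the floor `0` adds only the case `M t < 0`, where `a` is locally `0`. -/

open Topology

noncomputable def runningSup (g : ℝ → ℝ) (t : ℝ) : ℝ := sSup (g '' Icc 0 t)

section RunningSup

variable {g : ℝ → ℝ} {s t u : ℝ}

@[simp]
lemma runningSup_zero (g : ℝ → ℝ) : runningSup g 0 = g 0 := by
  simp [runningSup]

lemma continuousOn_Icc_of_nonneg (hg : ContinuousOn g (Ici 0)) (hs : 0 ≤ s) :
    ContinuousOn g (Icc s u) :=
  hg.mono fun _ hr => hs.trans hr.1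

lemma le_runningSup (hg : ContinuousOn g (Ici 0)) (ht : 0 ≤ t) : g t ≤ runningSup g t :=
  le_csSup (isCompact_Icc.bddAbove_image (continuousOn_Icc_of_nonneg hg le_rfl))
    (mem_image_of_mem g ⟨ht, le_rfl⟩)

lemma runningSup_eq_max (hg : ContinuousOn g (Ici 0)) (hs : 0 ≤ s) (hsu : s ≤ u) :
    runningSup g u = max (runningSup g s) (sSup (g '' Icc s u)) := by
  rw [runningSup, runningSup, ← Icc_union_Icc_eq_Icc hs hsu, image_union,
    csSup_union (isCompact_Icc.bddAbove_image (continuousOn_Icc_of_nonneg hg le_rfl))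
      ((nonempty_Icc.2 hs).image g)
      (isCompact_Icc.bddAbove_image (continuousOn_Icc_of_nonneg hg hs))
      ((nonempty_Icc.2 hsu).image g)]

lemma monotoneOn_runningSup (hg : ContinuousOn g (Ici 0)) :
    MonotoneOn (runningSup g) (Ici 0) :=
  fun _ hs _ _ hsu => (runningSup_eq_max hg hs hsu).symm ▸ le_max_left _ _

lemma continuousOn_runningSup (hg : ContinuousOn g (Ici 0)) :
    ContinuousOn (runningSup g) (Ici 0) := by
  set G : ℝ → ℝ := fun r => g (max r 0)
  have hG : Continuous G :=
    hg.comp_continuous (continuous_id.max continuous_const) fun r => le_max_right r 0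
  have hsup : Continuous fun t => sSup ((fun r => G (t * r)) '' Icc 0 1) :=
    isCompact_Icc.continuous_sSup (hG.comp (continuous_fst.mul continuous_snd))
  refine hsup.continuousOn.congr fun t (ht : 0 ≤ t) => ?_
  have hGt : (fun r => G (t * r)) '' Icc 0 1 = g '' Icc 0 t := by
    rw [show (fun r => G (t * r)) = G ∘ (t * ·) from rfl, image_comp,
      image_mul_left_Icc ht zero_le_one, mul_zero, mul_one]
    exact image_congr fun r hr => congrArg g (max_eq_left hr.1)
  simp only [runningSup, hGt]

lemma runningSup_eventuallyEq (hg : ContinuousOn g (Ici 0)) (ht : 0 ≤ t)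
    (hlt : g t < runningSup g t) :
    ∀ᶠ s in 𝓝[Ici 0] t, runningSup g s = runningSup g t := by
  obtain ⟨δ, hδ, hball⟩ := Metric.mem_nhdsWithin_iff.1 ((hg t ht).eventually_lt_const hlt)
  have hgap : ∀ p q, 0 ≤ p → p ∈ Metric.ball t δ → q ∈ Metric.ball t δ → p ≤ q →
      sSup (g '' Icc p q) < runningSup g t := by
    intro p q hp0 hp hq hpq
    refine (isCompact_Icc.sSup_lt_iff_of_continuous (nonempty_Icc.2 hpq)
      (continuousOn_Icc_of_nonneg hg hp0) _).2 fun r hr => hball ⟨?_, hp0.trans hr.1⟩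
    rw [Real.ball_eq_Ioo] at hp hq ⊢
    exact ordConnected_Ioo.out hp hq hr
  have htball : t ∈ Metric.ball t δ := Metric.mem_ball_self hδ
  filter_upwards [inter_mem_nhdsWithin (Ici 0) (Metric.ball_mem_nhds t hδ)]
    with s ⟨hs0, hs⟩
  rcases le_total s t with hst | hts
  · have hmax := runningSup_eq_max hg hs0 hst
    have hlt := hgap s t hs0 hs htball hst
    rw [hmax, lt_max_iff, or_iff_left (lt_irrefl _)] at hlt
    rw [hmax, max_eq_left hlt.le]
  · rw [runningSup_eq_max hg ht hts, max_eq_left (hgap t s ht htball hs hts).le]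

lemma max_runningSup_eventuallyEq (hg : ContinuousOn g (Ici 0)) (ht : 0 ≤ t) {c : ℝ}
    (hlt : g t < max c (runningSup g t)) :
    ∀ᶠ s in 𝓝[Ici 0] t, max c (runningSup g s) = max c (runningSup g t) := by
  by_cases hgt : g t < runningSup g t
  · filter_upwards [runningSup_eventuallyEq hg ht hgt] with s hs
    rw [hs]
  · have hc : runningSup g t < c := by
      by_contra! hcM
      exact hgt (max_eq_right hcM ▸ hlt)
    filter_upwards [(continuousOn_runningSup hg t ht).eventually_lt_const hc] with s hs
    rw [max_eq_left hs.le, max_eq_left hc.le]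

end RunningSup

/-- `a t = max 0 (max_{s ≤ t} (-f s))`, `x = a + f` is a Skorokhod
decomposition of `f`, with `a 0 = 0`. -/
theorem skorokhod_existence (f : ℝ → ℝ) (hf : ContinuousOn f (Set.Ici 0)) (hf0 : 0 ≤ f 0)
    (a x : ℝ → ℝ)
    (ha : ∀ t, a t = max 0 (sSup ((fun s => -f s) '' Set.Icc 0 t)))
    (hx : ∀ t, x t = a t + f t) :
    SkorokhodDecomp f a x ∧ a 0 = 0 := by
  set g : ℝ → ℝ := fun s => -f s
  have hg : ContinuousOn g (Ici 0) := hf.neg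
  obtain rfl : a = fun t => max 0 (runningSup g t) := funext ha
  obtain rfl : x = fun t => max 0 (runningSup g t) + f t := funext hx
  have ha0 : max 0 (runningSup g 0) = 0 := by
    rw [runningSup_zero]
    exact max_eq_left (neg_nonpos.2 hf0)
  have hac : ContinuousOn (fun t => max 0 (runningSup g t)) (Ici 0) :=
    continuousOn_const.sup (continuousOn_runningSup hg)
  refine ⟨⟨⟨hac, hac.add hf, ?_, ?_, fun _ _ => rfl, ?_⟩,
    fun t ht hxt => max_runningSup_eventuallyEq hg ht ?_⟩, ha0⟩
  · exact fun s hs t ht hst => max_le_max le_rfl (monotoneOn_runningSup hg hs ht hst)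
  · exact fun t ht => by linarith [(le_runningSup hg ht).trans (le_max_right 0 _)]
  · simp only [ha0, zero_add]
  · simp only [g]
    linarith
end

section
/- Let f : [0,∞) → ℝ be continuous with f(0) ≥ 0, let (a, x) be a Skorokhod decomposition of f, and let (b, y) be any admissible pair for f. Then b(t) − a(t) = y(t) − x(t) ≥ 0 for all t ≥ 0, i.e. each component of the Skorokhod decomposition is pointwise dominated by the corresponding component of any admissible pair. -/
open Set Filter MeasureTheory

open Topology

/-!
Suppose `b t < a t`. Since `b 0 = a 0 = 0`, there is a last time `c < t` with `b c ≥ a c`. On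
`(c, t]` we have `x = y + (a - b) > 0`, so `a` is locally constant there, hence (by connectedness
and continuity) `a c = a t`. Monotonicity of `b` then gives `b t - a t ≥ b c - a c ≥ 0`.
-/

theorem exists_last_nonneg_of_continuousOn {g : ℝ → ℝ} {s t : ℝ} (hst : s ≤ t)
    (hg : ContinuousOn g (Icc s t)) (hs : 0 ≤ g s) (ht : g t < 0) :
    ∃ c ∈ Ico s t, 0 ≤ g c ∧ ∀ v ∈ Ioc c t, g v < 0 := by
  set S := Icc s t ∩ g ⁻¹' Ici 0
  have hS : IsCompact S := isCompact_Icc.of_isClosed_subset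
    (hg.preimage_isClosed_of_isClosed isClosed_Icc isClosed_Ici) inter_subset_left
  obtain ⟨c, ⟨⟨hsc, hct⟩, hgc⟩, hmax⟩ := hS.exists_isGreatest ⟨s, ⟨left_mem_Icc.2 hst, hs⟩⟩
  have hct' : c ≠ t := by rintro rfl; exact absurd hgc (not_le.2 ht)
  refine ⟨c, ⟨hsc, lt_of_le_of_ne hct hct'⟩, hgc, fun v hv => ?_⟩
  by_contra! hgv
  exact absurd (hmax ⟨⟨hsc.trans hv.1.le, hv.2⟩, hgv⟩) (not_le.2 hv.1)

theorem eq_of_locallyConstantOn_Ioc {β : Type*} [TopologicalSpace β] [T2Space β]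
    {a : ℝ → β} {c t : ℝ} (hct : c < t) (ha : ContinuousWithinAt a (Ioc c t) c)
    (hloc : ∀ u ∈ Ioc c t, ∀ᶠ v in 𝓝[Ioc c t] u, a v = a u) : a c = a t := by
  have hconst : ∀ u ∈ Ioc c t, a u = a t := fun u hu =>
    isPreconnected_Ioc.induction₂ (fun u v => a u = a v)
      (fun u hu => (hloc u hu).mono fun _ h => h.symm)
      (fun _ _ _ _ _ _ => Eq.trans) (fun _ _ _ _ => Eq.symm) hu (right_mem_Ioc.2 hct)
  have : (𝓝[Ioc c t] c).NeBot := left_nhdsWithin_Ioc_neBot hct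
  exact tendsto_nhds_unique ha <|
    tendsto_const_nhds.congr' <| eventually_nhdsWithin_of_forall fun u hu => (hconst u hu).symm

namespace AdmissiblePair

variable {f b y : ℝ → ℝ}

theorem apply_zero (h : AdmissiblePair f b y) : b 0 = 0 := by
  obtain ⟨-, -, -, -, hy, hy0⟩ := h
  linarith [hy 0 self_mem_Ici]

theorem sub_eq_sub {a x : ℝ → ℝ} (hb : AdmissiblePair f b y) (ha : AdmissiblePair f a x)
    {t : ℝ} (ht : t ∈ Ici 0) : b t - a t = y t - x t := by
  linarith [hb.2.2.2.2.1 t ht, ha.2.2.2.2.1 t ht]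

end AdmissiblePair

theorem skorokhod_minimal_general (f a x b y : ℝ → ℝ)
    (hsk : SkorokhodDecomp f a x) (hadm : AdmissiblePair f b y) :
    ∀ t ∈ Set.Ici (0:ℝ), b t - a t = y t - x t ∧ 0 ≤ b t - a t := by
  obtain ⟨hax, hloc⟩ := hsk
  intro t ht
  refine ⟨hadm.sub_eq_sub hax ht, ?_⟩
  by_contra! hneg
  obtain ⟨c, ⟨hc0, hct⟩, hgc, hgneg⟩ :=
    exists_last_nonneg_of_continuousOn (g := fun u => b u - a u) ht
      ((hadm.1.sub hax.1).mono Icc_subset_Ici_self) (by simp [hadm.apply_zero, hax.apply_zero]) hneg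
  have hIoc : Ioc c t ⊆ Ici 0 := fun v hv => hc0.trans hv.1.le
  have hxpos : ∀ v ∈ Ioc c t, 0 < x v := fun v hv => by
    linarith [hadm.sub_eq_sub hax (hIoc hv), hadm.2.2.2.1 v (hIoc hv), hgneg v hv]
  have hac : a c = a t := eq_of_locallyConstantOn_Ioc hct
    ((hax.1 c hc0).mono fun v hv => hc0.trans hv.1.le)
    fun v hv => nhdsWithin_mono v hIoc (hloc v (hIoc hv) (hxpos v hv))
  linarith [hadm.2.2.1 hc0 ht hct.le]

/-- the Skorokhod decomposition is dominated by any admissible pair. -/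
theorem skorokhod_minimal (f a x b y : ℝ → ℝ)
    (hf : ContinuousOn f (Set.Ici 0)) (hf0 : 0 ≤ f 0)
    (hsk : SkorokhodDecomp f a x) (hadm : AdmissiblePair f b y) :
    ∀ t ∈ Set.Ici (0:ℝ), b t - a t = y t - x t ∧ 0 ≤ b t - a t :=
  skorokhod_minimal_general f a x b y hsk hadm
end

section
/- Let f : [0,∞) → ℝ be continuous with f(0) ≥ 0. Then the Skorokhod decomposition of f is unique: if (a, x) and (a', x') are both Skorokhod decompositions of f, then a = a' and x = x'. -/
open Set Filter MeasureTheory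

/- The Skorokhod solution `x` lies below every admissible `y`. Otherwise take the last time `s`
before a violation `t` with `x s ≤ y s`: on `(s, t]` we have `x > y ≥ 0`, so `a` stays constant,
while `b` can only grow, and `x - y = a - b` cannot have become positive. Applied in both
directions this pins down `x`, and then `a = x - f`. -/

open Topology

lemma ContinuousOn.eq_of_eventually_const_Ioo {g : ℝ → ℝ} {s t : ℝ} (hst : s ≤ t)
    (hg : ContinuousOn g (Icc s t)) (hloc : ∀ u ∈ Ioo s t, ∀ᶠ v in 𝓝 u, g v = g u) :
    g t = g s := by
  rcases hst.eq_or_lt with rfl | hst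
  · rfl
  have hderiv : ∀ u ∈ Ioo s t, HasDerivAt g 0 u := fun u hu =>
    (hasDerivAt_const u (g u)).congr_of_eventuallyEq (hloc u hu)
  obtain ⟨c, -, hc⟩ := exists_hasDerivAt_eq_slope g (fun _ => 0) hst hg hderiv
  rw [eq_comm, div_eq_zero_iff, sub_eq_zero] at hc
  exact hc.resolve_right (sub_ne_zero.2 hst.ne')

lemma ContinuousOn.exists_last_nonpos {g : ℝ → ℝ} {s t : ℝ} (hst : s ≤ t)
    (hg : ContinuousOn g (Icc s t)) (hs : g s ≤ 0) :
    ∃ r ∈ Icc s t, g r ≤ 0 ∧ ∀ u ∈ Ioc r t, 0 < g u := by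
  have hclosed : IsClosed (Icc s t ∩ g ⁻¹' Iic 0) :=
    hg.preimage_isClosed_of_isClosed isClosed_Icc isClosed_Iic
  obtain ⟨r, ⟨hr, hgr⟩, hmax⟩ := (isCompact_Icc.of_isClosed_subset hclosed
    inter_subset_left).exists_isGreatest ⟨s, ⟨le_rfl, hst⟩, hs⟩
  refine ⟨r, hr, hgr, fun u hu => lt_of_not_ge fun hgu => ?_⟩
  exact hu.1.not_ge (hmax ⟨⟨hr.1.trans hu.1.le, hu.2⟩, hgu⟩)

lemma SkorokhodDecomp.le_of_admissiblePair {f a x b y : ℝ → ℝ} (h : SkorokhodDecomp f a x)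
    (hby : AdmissiblePair f b y) {t : ℝ} (ht : 0 ≤ t) : x t ≤ y t := by
  obtain ⟨⟨ha, hx, -, -, hxa, hx0⟩, hloc⟩ := h
  obtain ⟨-, hy, hb, hy_nonneg, hyb, hy0⟩ := hby
  by_contra! hlt
  have hIcc : Icc 0 t ⊆ Ici 0 := Icc_subset_Ici_self
  obtain ⟨s, ⟨hs0, hst⟩, hs, hpos⟩ := ((hx.sub hy).mono hIcc).exists_last_nonpos ht
    (by simp [hx0, hy0])
  have has : a t = a s := by
    refine (ha.mono (Icc_subset_Ici_iff hst |>.2 hs0)).eq_of_eventually_const_Ioo hst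
      fun u hu => ?_
    have hu0 : 0 < u := hs0.trans_lt hu.1
    have hxu : 0 < x u :=
      (hy_nonneg u hu0.le).trans_lt (sub_pos.1 (hpos u (Ioo_subset_Ioc_self hu)))
    simpa [nhdsWithin_eq_nhds.2 (Ici_mem_nhds hu0)] using hloc u hu0.le hxu
  have hbs : b s ≤ b t := hb hs0 ht hst
  simp only [Pi.sub_apply] at hs
  linarith [hxa t ht, hxa s hs0, hyb t ht, hyb s hs0]

theorem skorokhod_unique_general (f a x a' x' : ℝ → ℝ)
    (h : SkorokhodDecomp f a x) (h' : SkorokhodDecomp f a' x') :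
    Set.EqOn a a' (Set.Ici 0) ∧ Set.EqOn x x' (Set.Ici 0) := by
  have hx : EqOn x x' (Ici 0) := fun t ht =>
    le_antisymm (h.le_of_admissiblePair h'.1 ht) (h'.le_of_admissiblePair h.1 ht)
  refine ⟨fun t ht => ?_, hx⟩
  have hxa := h.1.2.2.2.2.1 t ht
  have hxa' := h'.1.2.2.2.2.1 t ht
  linarith [hx ht]

/-- uniqueness of the Skorokhod decomposition. -/
theorem skorokhod_unique (f a x a' x' : ℝ → ℝ)
    (hf : ContinuousOn f (Set.Ici 0)) (hf0 : 0 ≤ f 0)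
    (h : SkorokhodDecomp f a x) (h' : SkorokhodDecomp f a' x') :
    Set.EqOn a a' (Set.Ici 0) ∧ Set.EqOn x x' (Set.Ici 0) :=
  skorokhod_unique_general f a x a' x' h h'
end

section
/- Suppose f is a nonnegative function defined for all sufficiently large x, locally integrable, such that the limit as x → ∞ of (∫^x f(y)² dy − f(x)) exists and is finite (for some fixed lower integration bound). Then f(x) → 0 as x → ∞ and ∫^∞ f(y)² dy is finite. -/
/-!
Write `F x = ∫_{x₀}^x f²`, a nondecreasing function with `F - f → L`. If `F` were unbounded, then
eventually `f ≥ u := F - L - 1 ≥ 1`, hence `u y ≥ u x + (y - x) u(x)²`. This Riccati-type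
inequality doubles `u` on every interval of length `1 / u`, so `u` would blow up in finite time.
Thus `F` is bounded, `f²` is integrable on `[x₀, ∞)`, and `f = F - (F - f)` converges; its limit
vanishes because an integrable function on a half-line can only tend to `0`.
-/

open Set Filter MeasureTheory intervalIntegral

theorem not_forall_add_mul_sq_le {u : ℝ → ℝ} {a : ℝ} (ha : 0 < u a) :
    ¬ ∀ x y, a ≤ x → x ≤ y → u x + (y - x) * u x ^ 2 ≤ u y := by
  intro h
  have hmono : ∀ x y, a ≤ x → x ≤ y → u x ≤ u y := fun x y hx hxy => by
    linarith [h x y hx hxy, mul_nonneg (sub_nonneg.2 hxy) (sq_nonneg (u x))]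
  have hpos : ∀ x, a ≤ x → 0 < u x := fun x hx => ha.trans_le (hmono a x le_rfl hx)
  have hdouble : ∀ x, a ≤ x → 2 * u x ≤ u (x + (u x)⁻¹) := by
    intro x hx
    have hstep := h x _ hx (le_add_of_nonneg_right (inv_nonneg.2 (hpos x hx).le))
    rwa [add_sub_cancel_left, sq, inv_mul_cancel_left₀ (hpos x hx).ne', ← two_mul] at hstep
  let t : ℕ → ℝ := fun n => Nat.rec a (fun _ s => s + (u s)⁻¹) n
  -- `t n + 2 / u (t n)` does not increase, so the points `t n` stay below `a + 2 / u a`.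
  have ht : ∀ n, a ≤ t n ∧ t n + 2 * (u (t n))⁻¹ ≤ a + 2 * (u a)⁻¹ ∧ 2 ^ n * u a ≤ u (t n) := by
    intro n
    induction n with
    | zero => simp [t]
    | succ n ih =>
      obtain ⟨hta, htb, htu⟩ := ih
      have hd := hdouble (t n) hta
      have hinv : (u (t n + (u (t n))⁻¹))⁻¹ ≤ (2 * u (t n))⁻¹ :=
        inv_anti₀ (by linarith [hpos _ hta]) hd
      refine ⟨le_add_of_le_of_nonneg hta (inv_nonneg.2 (hpos _ hta).le), ?_, ?_⟩
      · change t n + (u (t n))⁻¹ + 2 * (u (t n + (u (t n))⁻¹))⁻¹ ≤ _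
        rw [mul_inv] at hinv
        linarith
      · change _ ≤ u (t n + (u (t n))⁻¹)
        rw [pow_succ]
        linarith
  obtain ⟨n, hn⟩ := pow_unbounded_of_one_lt (u (a + 2 * (u a)⁻¹) / u a) one_lt_two
  obtain ⟨hta, htb, htu⟩ := ht n
  have hle : u (t n) ≤ u (a + 2 * (u a)⁻¹) :=
    hmono _ _ hta (by linarith [inv_pos.2 (hpos _ hta)])
  rw [div_lt_iff₀ ha] at hn
  linarith

theorem add_mul_le_intervalIntegral {g : ℝ → ℝ} {a x y c : ℝ}
    (hx : IntervalIntegrable g volume a x) (hy : IntervalIntegrable g volume a y) (hxy : x ≤ y)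
    (hc : ∀ t ∈ Icc x y, c ≤ g t) : (∫ t in a..x, g t) + (y - x) * c ≤ ∫ t in a..y, g t := by
  have hxy' : IntervalIntegrable g volume x y := hx.symm.trans hy
  have hconst := integral_mono_on hxy intervalIntegrable_const hxy' hc
  rw [intervalIntegral.integral_const, smul_eq_mul] at hconst
  rw [← integral_add_adjacent_intervals hx hxy']
  linarith

theorem integrableOn_Ioi_of_forall_intervalIntegral_le {g : ℝ → ℝ} {a M : ℝ} (hg : ∀ t, 0 ≤ g t)
    (hloc : ∀ x ∈ Ici a, IntervalIntegrable g volume a x)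
    (hM : ∀ x ∈ Ici a, ∫ t in a..x, g t ≤ M) : IntegrableOn g (Ioi a) := by
  refine integrableOn_Ioi_of_intervalIntegral_norm_bounded M a
    (fun x => (hloc _ (le_max_right x a)).1.mono_set (Ioc_subset_Ioc_right (le_max_left _ _)))
    tendsto_id ?_
  filter_upwards [eventually_ge_atTop a] with x hx
  simpa only [Real.norm_of_nonneg (hg _)] using hM x hx

theorem eq_zero_of_tendsto_of_integrableOn_Ioi {E : Type*} [NormedAddCommGroup E] {g : ℝ → E}
    {a : ℝ} {k : E} (hg : IntegrableOn g (Ioi a)) (hk : Tendsto g atTop (nhds k)) : k = 0 := by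
  refine IntegrableAtFilter.eq_zero_of_tendsto ⟨Ioi a, Ioi_mem_atTop a, hg⟩ (fun s hs => ?_) hk
  obtain ⟨b, hb⟩ := mem_atTop_sets.1 hs
  rw [← top_le_iff, ← Real.volume_Ici (a := b)]
  exact measure_mono hb

section SquareIntegral

variable {f : ℝ → ℝ} {x₀ : ℝ}
  (hloc : ∀ x ∈ Ici x₀, IntervalIntegrable (fun y => f y ^ 2) volume x₀ x)
include hloc

theorem intervalIntegral_sq_le_of_le {x y : ℝ} (hx : x₀ ≤ x) (hxy : x ≤ y) :
    ∫ t in x₀..x, f t ^ 2 ≤ ∫ t in x₀..y, f t ^ 2 := by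
  simpa using add_mul_le_intervalIntegral (hloc x hx) (hloc y (hx.trans hxy)) hxy
    (fun t _ => sq_nonneg (f t))

theorem exists_forall_intervalIntegral_sq_le {L : ℝ}
    (hlim : Tendsto (fun x => (∫ y in x₀..x, f y ^ 2) - f x) atTop (nhds L)) :
    ∃ M, ∀ x ∈ Ici x₀, ∫ t in x₀..x, f t ^ 2 ≤ M := by
  set F : ℝ → ℝ := fun x => ∫ t in x₀..x, f t ^ 2
  by_contra! hunb
  obtain ⟨a₁, ha₁⟩ := eventually_atTop.1 (hlim.eventually (eventually_le_nhds (lt_add_one L)))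
  obtain ⟨x₁, hx₁, hFx₁⟩ := hunb (L + 2)
  have hx₀a : x₀ ≤ max x₁ a₁ := hx₁.trans (le_max_left _ _)
  have hFa : L + 2 < F (max x₁ a₁) :=
    hFx₁.trans_le (intervalIntegral_sq_le_of_le hloc hx₁ (le_max_left _ _))
  refine not_forall_add_mul_sq_le (u := fun x => F x - L - 1) (by linarith) fun x y hx hxy => ?_
  have hux : 0 ≤ F x - L - 1 := by
    linarith [intervalIntegral_sq_le_of_le hloc hx₀a hx]
  have hsq : ∀ t ∈ Icc x y, (F x - L - 1) ^ 2 ≤ f t ^ 2 := by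
    intro t ht
    have hft := ha₁ t ((le_max_right _ _).trans (hx.trans ht.1))
    have hFt := intervalIntegral_sq_le_of_le hloc (hx₀a.trans hx) ht.1
    exact pow_le_pow_left₀ hux (by linarith) 2
  have hgrowth := add_mul_le_intervalIntegral (hloc x (hx₀a.trans hx))
    (hloc y (hx₀a.trans (hx.trans hxy))) hxy hsq
  linarith

end SquareIntegral

theorem tendsto_zero_of_integral_sub_tendsto_general (f : ℝ → ℝ) (x₀ : ℝ)
    (hloc : ∀ x ∈ Set.Ici x₀, IntervalIntegrable (fun y => f y ^ 2) volume x₀ x)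
    (L : ℝ)
    (hlim : Tendsto (fun x => (∫ y in x₀..x, f y ^ 2) - f x) atTop (nhds L)) :
    Tendsto f atTop (nhds 0) ∧ IntegrableOn (fun y => f y ^ 2) (Set.Ici x₀) volume := by
  obtain ⟨M, hM⟩ := exists_forall_intervalIntegral_sq_le hloc hlim
  have hint : IntegrableOn (fun y => f y ^ 2) (Ioi x₀) :=
    integrableOn_Ioi_of_forall_intervalIntegral_le (fun t => sq_nonneg (f t)) hloc hM
  have hf : Tendsto f atTop (nhds ((∫ y in Ioi x₀, f y ^ 2) - L)) :=
    ((intervalIntegral_tendsto_integral_Ioi x₀ hint tendsto_id).sub hlim).congr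
      fun x => sub_sub_cancel _ _
  have hzero := pow_eq_zero_iff two_ne_zero |>.1 <|
    eq_zero_of_tendsto_of_integrableOn_Ioi hint (hf.pow 2)
  exact ⟨hzero ▸ hf, (integrableOn_Ici_iff_integrableOn_Ioi).2 hint⟩

/-- if `f ≥ 0` for `x ≥ x₀`, `f²` is locally integrable, and
`∫_{x₀}^x f² - f x` converges to a finite limit as `x → ∞`, then `f x → 0`
and `∫_{x₀}^∞ f²` is finite. -/
theorem tendsto_zero_of_integral_sub_tendsto (f : ℝ → ℝ) (x₀ : ℝ)
    (hpos : ∀ x ∈ Set.Ici x₀, 0 ≤ f x)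
    (hloc : ∀ x ∈ Set.Ici x₀, IntervalIntegrable (fun y => f y ^ 2) volume x₀ x)
    (L : ℝ)
    (hlim : Tendsto (fun x => (∫ y in x₀..x, f y ^ 2) - f x) atTop (nhds L)) :
    Tendsto f atTop (nhds 0) ∧ IntegrableOn (fun y => f y ^ 2) (Set.Ici x₀) volume :=
  tendsto_zero_of_integral_sub_tendsto_general f x₀ hloc L hlim
end

section
/- Let e, f be nonnegative functions defined on an interval (0, z₀), with e locally integrable, such that ∫_z^{z₀} e(u) du → +∞ as z → 0⁺, and such that the limit as z → 0⁺ of (∫_z^{z₀} f(u)² e(u) du − f(z)) exists and is finite. Then f(z) → 0 as z → 0⁺ and ∫_{0⁺}^{z₀} f(u)² e(u) du is finite. -/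
open Set Filter MeasureTheory Topology

/-!
Write `I z = ∫_z^{z₀} f² e` and `E z = ∫_z^{z₀} e`. Wherever `f ≥ c ≥ 0` on `(z, z']`,
`I z - I z' ≥ c² (E z - E z')`; in particular `I` increases as `z ↓ 0`.

If `I` were unbounded near `0`, then `I - f → L` would give `f ≥ I / 2` near `0`, a discrete form
of `-I' ≥ (I / 2)² (-E')`. Comparing along the points where `I` doubles shows that `E + 8 / I`
increases with `z`, so `E` stays bounded near `0`: impossible. Hence `I` has a finite limit `M`
and `f → M - L ≥ 0`; if `M - L > 0`, then `I z ≥ I δ + ((M - L) / 2)² (E z - E δ) → ∞`, again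
impossible.
-/

theorem integral_Ioc_sub_integral_Ioc {g : ℝ → ℝ} {z z' b : ℝ} (hzz' : z ≤ z') (hz'b : z' ≤ b)
    (hg : IntegrableOn g (Ioc z b)) :
    (∫ u in Ioc z b, g u) - ∫ u in Ioc z' b, g u = ∫ u in Ioc z z', g u := by
  have := setIntegral_union (Ioc_disjoint_Ioc_of_le le_rfl) measurableSet_Ioc
    (hg.mono_set (Ioc_subset_Ioc_right hz'b)) (hg.mono_set (Ioc_subset_Ioc_left hzz'))
  rw [Ioc_union_Ioc_eq_Ioc hzz' hz'b] at this
  rw [this, add_sub_cancel_right]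

/-- A discrete form of `-I' ≥ f² (-E')` on `(0, b)`. -/
def SqMulSubLeOn (I E f : ℝ → ℝ) (b : ℝ) : Prop :=
  ∀ z z' c, 0 < z → z ≤ z' → z' < b → 0 ≤ c → (∀ u ∈ Ioc z z', c ≤ f u) →
    c ^ 2 * (E z - E z') ≤ I z - I z'

theorem sqMulSubLeOn_integral_Ioc {e f : ℝ → ℝ} {b : ℝ} (he : ∀ u ∈ Ioo 0 b, 0 ≤ e u)
    (heloc : ∀ z ∈ Ioo 0 b, IntegrableOn e (Ioc z b))
    (hfloc : ∀ z ∈ Ioo 0 b, IntegrableOn (fun u => f u ^ 2 * e u) (Ioc z b)) :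
    SqMulSubLeOn (fun z => ∫ u in Ioc z b, f u ^ 2 * e u) (fun z => ∫ u in Ioc z b, e u) f b := by
  intro z z' c hz hzz' hz' hc hcf
  have hzb : z ∈ Ioo 0 b := ⟨hz, hzz'.trans_lt hz'⟩
  rw [integral_Ioc_sub_integral_Ioc hzz' hz'.le (heloc z hzb),
    integral_Ioc_sub_integral_Ioc hzz' hz'.le (hfloc z hzb), ← integral_const_mul]
  refine setIntegral_mono_on (((heloc z hzb).mono_set (Ioc_subset_Ioc_right hz'.le)).const_mul _)
    ((hfloc z hzb).mono_set (Ioc_subset_Ioc_right hz'.le)) measurableSet_Ioc fun u hu => ?_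
  gcongr
  exacts [he u ⟨hz.trans hu.1, hu.2.trans_lt hz'⟩, hcf u hu]

theorem continuousOn_integral_Ioc {g : ℝ → ℝ} {a b : ℝ}
    (hg : ∀ z ∈ Ioo a b, IntegrableOn g (Ioc z b)) :
    ContinuousOn (fun z => ∫ u in Ioc z b, g u) (Ioo a b) := by
  intro x hx
  obtain ⟨y, hay, hyx⟩ := exists_between hx.1
  have hyb : y ≤ b := (hyx.trans hx.2).le
  have hprim : ContinuousOn (fun z => ∫ u in z..b, g u) (Icc y b) := by
    rw [← uIcc_of_le hyb]
    refine intervalIntegral.continuousOn_primitive_interval_left ?_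
    rw [uIcc_of_le hyb, integrableOn_Icc_iff_integrableOn_Ioc]
    exact hg y ⟨hay, hyx.trans hx.2⟩
  refine ContinuousAt.continuousWithinAt ?_
  refine ((hprim x ⟨hyx.le, hx.2.le⟩).continuousAt (Icc_mem_nhds hyx hx.2)).congr ?_
  filter_upwards [Iio_mem_nhds hx.2] with z hz using intervalIntegral.integral_of_le hz.le

theorem integrableOn_Ioo_of_integral_Ioc_le {g : ℝ → ℝ} {a b C : ℝ}
    (hg0 : ∀ u ∈ Ioo a b, 0 ≤ g u) (hg : ∀ z ∈ Ioo a b, IntegrableOn g (Ioc z b))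
    (hC : ∀ z ∈ Ioo a b, ∫ u in Ioc z b, g u ≤ C) : IntegrableOn g (Ioo a b) := by
  rcases le_or_gt b a with hba | hab
  · simp [Ioo_eq_empty_of_le hba]
  obtain ⟨s, -, hs, hsa⟩ := exists_seq_strictAnti_tendsto' hab
  have hsub : ∀ n, Ioo (s n) b ⊆ Ioo a b := fun n => Ioo_subset_Ioo_left (hs n).1.le
  have hcover := aecover_Ioo_of_Ioo (μ := volume) (b := fun _ => b) hsa tendsto_const_nhds
  refine hcover.integrable_of_integral_bounded_of_nonneg_ae C
    (fun n => ((hg (s n) (hs n)).mono_set Ioo_subset_Ioc_self).restrict) ?_ ?_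
  · exact (ae_restrict_mem measurableSet_Ioo).mono hg0
  · refine Eventually.of_forall fun n => ?_
    rw [Measure.restrict_restrict measurableSet_Ioo, inter_eq_left.2 (hsub n),
      ← integral_Ioc_eq_integral_Ioo]
    exact hC (s n) (hs n)

theorem AntitoneOn.tendsto_atTop_nhdsGT_of_not_bddAbove {α β : Type*} [LinearOrder α]
    [TopologicalSpace α] [OrderTopology α] [LinearOrder β] {f : α → β} {a b : α}
    (hf : AntitoneOn f (Ioo a b)) (h : ¬BddAbove (f '' Ioo a b)) : Tendsto f (𝓝[>] a) atTop := by
  refine tendsto_atTop.2 fun C => ?_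
  obtain ⟨_, ⟨z, hz, rfl⟩, hCz⟩ := not_bddAbove_iff.1 h C
  filter_upwards [Ioo_mem_nhdsGT hz.1] with w hw
  exact hCz.le.trans (hf ⟨hw.1, hw.2.trans hz.2⟩ hz hw.2.le)

theorem add_two_div_le_add_two_div_of_sq_mul_sub_le {a b x y : ℝ} (hb : 0 < b) (hba : b ≤ a)
    (hab : a ≤ 2 * b) (h : b ^ 2 * (x - y) ≤ a - b) : x + 2 / a ≤ y + 2 / b := by
  have ha : 0 < a := hb.trans_le hba
  have h₁ : x - y ≤ (a - b) / b ^ 2 := by rw [le_div_iff₀ (by positivity)]; linarith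
  have h₂ : (a - b) / b ^ 2 ≤ 2 / b - 2 / a := by
    rw [div_sub_div _ _ hb.ne' ha.ne', div_le_div_iff₀ (by positivity) (by positivity)]
    nlinarith [mul_nonneg (sub_nonneg.2 hba) (sub_nonneg.2 hab)]
  linarith

theorem add_two_div_le_of_sq_mul_sub_le {I E : ℝ → ℝ} {z₁ : ℝ} (hI₁ : 0 < I z₁)
    (hI : AntitoneOn I (Ioc 0 z₁)) (hIc : ContinuousOn I (Ioc 0 z₁))
    (hIE : ∀ z ∈ Ioc 0 z₁, ∀ z' ∈ Icc z z₁, I z' ^ 2 * (E z - E z') ≤ I z - I z') :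
    ∀ z ∈ Ioc 0 z₁, E z + 2 / I z ≤ E z₁ + 2 / I z₁ := by
  intro z hz
  have hz₁ : z₁ ∈ Ioc 0 z₁ := ⟨hz.1.trans_le hz.2, le_rfl⟩
  have step : ∀ w ∈ Ioc 0 z₁, ∀ w' ∈ Icc w z₁, I w ≤ 2 * I w' →
      E w + 2 / I w ≤ E w' + 2 / I w' := fun w hw w' hw' h =>
    have hw'₁ : w' ∈ Ioc 0 z₁ := ⟨hw.1.trans_le hw'.1, hw'.2⟩
    add_two_div_le_add_two_div_of_sq_mul_sub_le (hI₁.trans_le (hI hw'₁ hz₁ hw'.2))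
      (hI hw hw'₁ hw'.1) h (hIE w hw w' hw')
  have doubling : ∀ n : ℕ, ∀ w ∈ Ioc 0 z₁, I w ≤ 2 ^ n * I z₁ →
      E w + 2 / I w ≤ E z₁ + 2 / I z₁ := by
    intro n
    induction n with
    | zero => exact fun w hw h => step w hw z₁ ⟨hw.2, le_rfl⟩ (by linarith)
    | succ n ih =>
      intro w hw h
      rcases le_or_gt (I w) (2 ^ n * I z₁) with hlow | hhigh
      · exact ih w hw hlow
      obtain ⟨w', hw', hIw'⟩ : 2 ^ n * I z₁ ∈ I '' Icc w z₁ :=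
        intermediate_value_Icc' hw.2 (hIc.mono (Icc_subset_Ioc hw.1 le_rfl))
          ⟨le_mul_of_one_le_left hI₁.le (one_le_pow₀ one_le_two), hhigh.le⟩
      calc E w + 2 / I w ≤ E w' + 2 / I w' :=
            step w hw w' hw' (by rwa [hIw', ← mul_assoc, ← pow_succ'])
        _ ≤ E z₁ + 2 / I z₁ := ih w' ⟨hw.1.trans_le hw'.1, hw'.2⟩ hIw'.le
  obtain ⟨n, hn⟩ := pow_unbounded_of_one_lt (I z / I z₁) one_lt_two
  exact doubling n z hz ((div_lt_iff₀ hI₁).1 hn).le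

theorem SqMulSubLeOn.antitoneOn {I E f : ℝ → ℝ} {b : ℝ} (hIE : SqMulSubLeOn I E f b)
    (hf0 : ∀ u ∈ Ioo 0 b, 0 ≤ f u) : AntitoneOn I (Ioo 0 b) := fun z hz z' hz' hzz' => by
  simpa using hIE z z' 0 hz.1 hzz' hz'.2 le_rfl fun u hu =>
    hf0 u ⟨hz.1.trans hu.1, hu.2.trans_lt hz'.2⟩

theorem SqMulSubLeOn.bddAbove_image_of_tendsto_sub {I E f : ℝ → ℝ} {b L : ℝ}
    (hIE : SqMulSubLeOn I E f b) (hb : 0 < b) (hf0 : ∀ u ∈ Ioo 0 b, 0 ≤ f u)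
    (hIc : ContinuousOn I (Ioo 0 b)) (hE : Tendsto E (𝓝[>] 0) atTop)
    (hlim : Tendsto (fun z => I z - f z) (𝓝[>] 0) (𝓝 L)) :
    BddAbove (I '' Ioo 0 b) := by
  by_contra hunb
  have hanti := hIE.antitoneOn hf0
  obtain ⟨z₁, hz₁, hnear⟩ := mem_nhdsGT_iff_exists_Ioc_subset.1 <|
    (hlim.eventually (eventually_le_nhds (lt_add_one L))).and <|
      ((hanti.tendsto_atTop_nhdsGT_of_not_bddAbove hunb).eventually_gt_atTop
        (max (2 * (L + 1)) 0)).and (Ioo_mem_nhdsGT hb)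
  have hsub : Ioc 0 z₁ ⊆ Ioo 0 b := fun v hv => (hnear hv).2.2
  have hIpos : ∀ v ∈ Ioc 0 z₁, 0 < I v := fun v hv => (le_max_right _ _).trans_lt (hnear hv).2.1
  have hf : ∀ v ∈ Ioc 0 z₁, I v / 2 ≤ f v := fun v hv => by
    have := (le_max_left _ _).trans_lt (hnear hv).2.1
    linarith [(hnear hv).1]
  have hz₁' : z₁ ∈ Ioc 0 z₁ := ⟨hz₁, le_rfl⟩
  have hEbdd := add_two_div_le_of_sq_mul_sub_le (E := fun z => E z / 4) (hIpos z₁ hz₁')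
    (hanti.mono hsub) (hIc.mono hsub) fun z hz z' hz' => by
      have hz'₁ : z' ∈ Ioc 0 z₁ := ⟨hz.1.trans_le hz'.1, hz'.2⟩
      have := hIE z z' (I z' / 2) hz.1 hz'.1 (hsub hz'₁).2 (half_pos (hIpos z' hz'₁)).le fun v hv =>
        have hv₁ : v ∈ Ioc 0 z₁ := ⟨hz.1.trans hv.1, hv.2.trans hz'.2⟩
        (div_le_div_of_nonneg_right (hanti (hsub hv₁) (hsub hz'₁) hv.2) two_pos.le).trans (hf v hv₁)
      linarith
  obtain ⟨z, hEz, hz⟩ :=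
    ((hE.eventually_gt_atTop (4 * (E z₁ / 4 + 2 / I z₁))).and (Ioo_mem_nhdsGT hz₁)).exists
  have := hEbdd z ⟨hz.1, hz.2.le⟩
  have := div_pos two_pos (hIpos z ⟨hz.1, hz.2.le⟩)
  dsimp only at *
  linarith

theorem SqMulSubLeOn.tendsto_zero_of_bddAbove_image {I E f : ℝ → ℝ} {b L : ℝ}
    (hIE : SqMulSubLeOn I E f b) (hb : 0 < b) (hf0 : ∀ u ∈ Ioo 0 b, 0 ≤ f u)
    (hI : BddAbove (I '' Ioo 0 b)) (hE : Tendsto E (𝓝[>] 0) atTop)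
    (hlim : Tendsto (fun z => I z - f z) (𝓝[>] 0) (𝓝 L)) :
    Tendsto f (𝓝[>] 0) (𝓝 0) := by
  set M := sSup (I '' Ioo 0 b)
  have hIM : Tendsto I (𝓝[>] 0) (𝓝 M) :=
    (hIE.antitoneOn hf0).tendsto_nhdsWithin_Ioo_right (nonempty_Ioo.2 hb) hI
  have hfM : Tendsto f (𝓝[>] 0) (𝓝 (M - L)) := by simpa using hIM.sub hlim
  have hML : 0 ≤ M - L := ge_of_tendsto hfM (eventually_of_mem (Ioo_mem_nhdsGT hb) hf0)
  suffices M - L ≤ 0 by rwa [le_antisymm this hML] at hfM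
  by_contra! hpos
  set c := (M - L) / 2
  obtain ⟨δ, hδ, hnear⟩ := mem_nhdsGT_iff_exists_Ioc_subset.1 <|
    (hfM.eventually (lt_mem_nhds (half_lt_self hpos))).and (Ioo_mem_nhdsGT hb)
  have hlower : Tendsto (fun z => I δ + c ^ 2 * (E z + -E δ)) (𝓝[>] 0) atTop :=
    tendsto_atTop_add_const_left _ _ <|
      (tendsto_atTop_add_const_right _ _ hE).const_mul_atTop (by positivity)
  refine not_tendsto_atTop_of_tendsto_nhds hIM (tendsto_atTop_mono' _ ?_ hlower)
  filter_upwards [Ioo_mem_nhdsGT (show (0 : ℝ) < δ from hδ)] with z hz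
  have := hIE z δ c hz.1 hz.2.le (hnear ⟨hδ, le_rfl⟩).2.2 (by positivity) fun u hu =>
    (hnear ⟨hz.1.trans hu.1, hu.2⟩).1.le
  linarith

theorem tendsto_zero_of_integral_sub_tendsto_zero_general (e f : ℝ → ℝ) (z₀ : ℝ) (hz₀ : 0 < z₀)
    (he : ∀ u ∈ Set.Ioo 0 z₀, 0 ≤ e u) (hfpos : ∀ u ∈ Set.Ioo 0 z₀, 0 ≤ f u)
    (heloc : ∀ z ∈ Set.Ioo 0 z₀, IntegrableOn e (Set.Ioc z z₀) volume)
    (hfloc : ∀ z ∈ Set.Ioo 0 z₀, IntegrableOn (fun u => f u ^ 2 * e u) (Set.Ioc z z₀) volume)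
    (hediv : Tendsto (fun z => ∫ u in Set.Ioc z z₀, e u) (nhdsWithin 0 (Set.Ioi 0)) atTop)
    (L : ℝ)
    (hlim : Tendsto (fun z => (∫ u in Set.Ioc z z₀, f u ^ 2 * e u) - f z)
      (nhdsWithin 0 (Set.Ioi 0)) (nhds L)) :
    Tendsto f (nhdsWithin 0 (Set.Ioi 0)) (nhds 0) ∧
      IntegrableOn (fun u => f u ^ 2 * e u) (Set.Ioo 0 z₀) volume := by
  have hIE := sqMulSubLeOn_integral_Ioc he heloc hfloc
  obtain ⟨C, hC⟩ := hIE.bddAbove_image_of_tendsto_sub hz₀ hfpos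
    (continuousOn_integral_Ioc hfloc) hediv hlim
  exact ⟨hIE.tendsto_zero_of_bddAbove_image hz₀ hfpos ⟨C, hC⟩ hediv hlim,
    integrableOn_Ioo_of_integral_Ioc_le (fun u hu => mul_nonneg (sq_nonneg _) (he u hu)) hfloc
      fun z hz => hC ⟨z, hz, rfl⟩⟩

/-- if `e, f ≥ 0` on `(0, z₀)`, `∫_z^{z₀} e → ∞` as `z → 0⁺`, and
`∫_z^{z₀} f² e − f z` converges to a finite limit as `z → 0⁺`, then `f z → 0`
as `z → 0⁺` and `∫_{0}^{z₀} f² e` is finite. -/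
theorem tendsto_zero_of_integral_sub_tendsto_zero (e f : ℝ → ℝ) (z₀ : ℝ) (hz₀ : 0 < z₀)
    (he : ∀ u ∈ Set.Ioo 0 z₀, 0 ≤ e u) (hfpos : ∀ u ∈ Set.Ioo 0 z₀, 0 ≤ f u)
    (hfmeas : Measurable f)
    (heloc : ∀ z ∈ Set.Ioo 0 z₀, IntegrableOn e (Set.Ioc z z₀) volume)
    (hfloc : ∀ z ∈ Set.Ioo 0 z₀, IntegrableOn (fun u => f u ^ 2 * e u) (Set.Ioc z z₀) volume)
    (hediv : Tendsto (fun z => ∫ u in Set.Ioc z z₀, e u) (nhdsWithin 0 (Set.Ioi 0)) atTop)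
    (L : ℝ)
    (hlim : Tendsto (fun z => (∫ u in Set.Ioc z z₀, f u ^ 2 * e u) - f z)
      (nhdsWithin 0 (Set.Ioi 0)) (nhds L)) :
    Tendsto f (nhdsWithin 0 (Set.Ioi 0)) (nhds 0) ∧
      IntegrableOn (fun u => f u ^ 2 * e u) (Set.Ioo 0 z₀) volume :=
  tendsto_zero_of_integral_sub_tendsto_zero_general e f z₀ hz₀ he hfpos heloc hfloc hediv L hlim
end

section
/- Let b > −1, σ > 0, Ĵ > 0. The unique continuous solution φ : (0, ∞) → ℝ of the integral equation φ(z) z^{−b} + ∫₀^z φ(u)² u^{−b} du = σ/Ĵ (for all z > 0, with the integral converging at 0) is φ(z) = z^b / (Ĵ/σ + z^{b+1}/(b+1)). Consequently, exp(−∫_y^z φ(u) du) = (1 + σ Ĵ^{−1} y^{b+1}/(b+1)) / (1 + σ Ĵ^{−1} z^{b+1}/(b+1)) for 0 < y < z. -/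
/-!
Put `c = Ĵ/σ` and `D z = c + z^{b+1}/(b+1)`, so that `D' = z^b`. For a solution `ψ`, the function
`F = ψ z^{-b} = c⁻¹ - ∫₀^z ψ² u^{-b}` solves the Riccati equation `F' = -z^b F²` with `F(0+) = c⁻¹`,
and `1/D` is the explicit such solution. The defect `E = F D - 1` solves the linear equation
`E' = -ψ E` and tends to `0` at `0`; as `ψ` is integrable near `0` (by `2|ψ| ≤ ψ² u^{-b} + u^b`),
the integrating factor `exp (∫ ψ)` stays bounded there, which forces `E ≡ 0`.
Finally `∫_y^z φ = log D(z) - log D(y)`.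
-/

open Set Filter MeasureTheory Real intervalIntegral

open Topology

section Primitive

variable {f : ℝ → ℝ} {x₀ z c t : ℝ}

theorem hasDerivAt_primitive_of_continuousOn {s : Set ℝ} (hf : ContinuousOn f s) (hs : IsOpen s)
    (hint : IntervalIntegrable f volume c t) (ht : t ∈ s) :
    HasDerivAt (fun x => ∫ u in c..x, f u) (f t) t :=
  integral_hasDerivAt_right hint (hf.stronglyMeasurableAtFilter hs t ht)
    (hf.continuousAt (hs.mem_nhds ht))

theorem tendsto_primitive_nhdsGT (hz : x₀ < z) (hf : IntervalIntegrable f volume x₀ z)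
    (hc : c ∈ uIcc x₀ z) :
    Tendsto (fun x => ∫ u in c..x, f u) (𝓝[>] x₀) (𝓝 (∫ u in c..x₀, f u)) := by
  rw [← nhdsWithin_Ioc_eq_nhdsGT hz]
  exact (continuousOn_primitive_interval' hf hc x₀ left_mem_uIcc).mono
    (Ioc_subset_Icc_self.trans Icc_subset_uIcc)

-- `g · exp (-∫ a)` is constant on `(x₀, z]` and tends to `0` at `x₀`.
theorem eq_zero_of_hasDerivAt_eq_mul_of_tendsto_zero {a g : ℝ → ℝ} (hz : x₀ < z)
    (ha : ContinuousOn a (Ioi x₀)) (ha_int : IntervalIntegrable a volume x₀ z)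
    (hg : ∀ t ∈ Ioi x₀, HasDerivAt g (a t * g t) t) (hg₀ : Tendsto g (𝓝[>] x₀) (𝓝 0)) :
    g z = 0 := by
  set Q : ℝ → ℝ := fun s => g s * exp (-∫ u in z..s, a u) with hQ
  have hQ' : ∀ t ∈ Ioi x₀, HasDerivAt Q 0 t := by
    intro t ht
    have hint : IntervalIntegrable a volume z t :=
      (ha.mono fun x hx => lt_of_lt_of_le (lt_min hz ht) hx.1).intervalIntegrable
    refine ((hg t ht).mul
      (hasDerivAt_primitive_of_continuousOn ha isOpen_Ioi hint ht).neg.exp).congr_deriv ?_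
    ring
  have hQ_const : ∀ t ∈ Ioc x₀ z, Q t = g z := by
    intro t ht
    have hQ_Icc : ∀ s ∈ Icc t z, HasDerivAt Q 0 s := fun s hs => hQ' s (ht.1.trans_le hs.1)
    have := constant_of_has_deriv_right_zero
      (fun s hs => (hQ_Icc s hs).continuousAt.continuousWithinAt)
      (fun s hs => (hQ_Icc s (Ico_subset_Icc_self hs)).hasDerivWithinAt) z ⟨ht.2, le_rfl⟩
    simpa [hQ] using this.symm
  have hQ₀ : Tendsto Q (𝓝[>] x₀) (𝓝 0) := by
    simpa using hg₀.mul (tendsto_primitive_nhdsGT hz ha_int right_mem_uIcc).neg.rexp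
  refine tendsto_nhds_unique (tendsto_const_nhds.congr' ?_) hQ₀
  rw [← nhdsWithin_Ioc_eq_nhdsGT hz]
  filter_upwards [self_mem_nhdsWithin] with t ht using (hQ_const t ht).symm

end Primitive

section Riccati

variable {b c : ℝ}

theorem add_rpow_div_pos (hb : -1 < b) (hc : 0 < c) {z : ℝ} (hz : 0 ≤ z) :
    0 < c + z ^ (b + 1) / (b + 1) := by
  have : 0 < b + 1 := by linarith
  have := rpow_nonneg hz (b + 1)
  positivity

theorem continuous_add_rpow_div (hb : 0 ≤ b + 1) :
    Continuous fun z : ℝ => c + z ^ (b + 1) / (b + 1) :=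
  continuous_const.add ((continuous_rpow_const hb).div_const _)

theorem hasDerivAt_add_rpow_div (hb : b + 1 ≠ 0) {z : ℝ} (hz : 0 < z) :
    HasDerivAt (fun z : ℝ => c + z ^ (b + 1) / (b + 1)) (z ^ b) z := by
  refine (((hasDerivAt_rpow_const (p := b + 1) (Or.inl hz.ne')).div_const (b + 1)).const_add
    c).congr_deriv ?_
  rw [add_sub_cancel_right]
  field_simp

theorem continuousOn_rpow_div_add_rpow_div (hb : -1 < b) (hc : 0 < c) :
    ContinuousOn (fun z : ℝ => z ^ b / (c + z ^ (b + 1) / (b + 1))) (Ioi 0) :=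
  (continuousOn_id.rpow_const fun _ hz => Or.inl (ne_of_gt hz)).div
    (continuous_add_rpow_div (by linarith)).continuousOn
    fun _ hz => (add_rpow_div_pos hb hc (le_of_lt hz)).ne'

theorem hasDerivAt_neg_inv_add_rpow_div (hb : -1 < b) (hc : 0 < c) {z : ℝ} (hz : 0 < z) :
    HasDerivAt (fun z : ℝ => -(c + z ^ (b + 1) / (b + 1))⁻¹)
      (z ^ b / (c + z ^ (b + 1) / (b + 1)) ^ 2) z := by
  refine ((hasDerivAt_add_rpow_div (c := c) (by linarith) hz).inv
    (add_rpow_div_pos hb hc hz.le).ne').neg.congr_deriv ?_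
  ring

theorem continuousOn_neg_inv_add_rpow_div (hb : -1 < b) (hc : 0 < c) :
    ContinuousOn (fun z : ℝ => -(c + z ^ (b + 1) / (b + 1))⁻¹) (Ici 0) :=
  ((continuous_add_rpow_div (by linarith)).continuousOn.inv₀
    fun _ hz => (add_rpow_div_pos hb hc hz).ne').neg

theorem intervalIntegrable_rpow_div_add_rpow_div_sq (hb : -1 < b) (hc : 0 < c) {z : ℝ}
    (hz : 0 ≤ z) :
    IntervalIntegrable (fun u : ℝ => u ^ b / (c + u ^ (b + 1) / (b + 1)) ^ 2) volume 0 z := by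
  refine intervalIntegrable_deriv_of_nonneg
    ((continuousOn_neg_inv_add_rpow_div hb hc).mono ?_) (fun u hu => ?_) (fun u hu => ?_)
  · simpa [uIcc_of_le hz] using Icc_subset_Ici_self
  · exact hasDerivAt_neg_inv_add_rpow_div hb hc (by simpa [hz] using hu.1)
  · have := rpow_nonneg (by simpa [hz] using hu.1.le : (0 : ℝ) ≤ u) b
    positivity

theorem integral_rpow_div_add_rpow_div_sq (hb : -1 < b) (hc : 0 < c) {z : ℝ} (hz : 0 ≤ z) :
    ∫ u in 0..z, u ^ b / (c + u ^ (b + 1) / (b + 1)) ^ 2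
      = c⁻¹ - (c + z ^ (b + 1) / (b + 1))⁻¹ := by
  rw [integral_eq_sub_of_hasDerivAt_of_le hz
    ((continuousOn_neg_inv_add_rpow_div hb hc).mono Icc_subset_Ici_self)
    (fun u hu => hasDerivAt_neg_inv_add_rpow_div hb hc hu.1)
    (intervalIntegrable_rpow_div_add_rpow_div_sq hb hc hz),
    zero_rpow (by linarith : b + 1 ≠ 0)]
  ring

theorem integral_rpow_div_add_rpow_div (hb : -1 < b) (hc : 0 < c) {y z : ℝ} (hy : 0 < y)
    (hyz : y ≤ z) :
    ∫ u in y..z, u ^ b / (c + u ^ (b + 1) / (b + 1))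
      = log (c + z ^ (b + 1) / (b + 1)) - log (c + y ^ (b + 1) / (b + 1)) := by
  have hpos : ∀ u ∈ uIcc y z, 0 < u := fun u hu => hy.trans_le (by simpa [hyz] using hu.1)
  refine integral_eq_sub_of_hasDerivAt (f := fun u => log (c + u ^ (b + 1) / (b + 1)))
    (fun u hu => ?_) (ContinuousOn.intervalIntegrable ?_)
  · exact (hasDerivAt_add_rpow_div (by linarith) (hpos u hu)).log
      (add_rpow_div_pos hb hc (hpos u hu).le).ne'
  · exact (continuousOn_rpow_div_add_rpow_div hb hc).mono hpos

theorem two_mul_abs_le_sq_mul_rpow_neg_add_rpow (x : ℝ) {u : ℝ} (hu : 0 < u) :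
    2 * |x| ≤ x ^ 2 * u ^ (-b) + u ^ b := by
  have hp : 0 < u ^ b := rpow_pos_of_pos hu b
  have hq : 0 < u ^ (-b) := rpow_pos_of_pos hu (-b)
  have hpq : u ^ (-b) * u ^ b = 1 := by rw [← rpow_add hu, neg_add_cancel, rpow_zero]
  nlinarith [mul_nonneg hq.le (sq_nonneg (|x| - u ^ b)), sq_abs x]

theorem intervalIntegrable_of_sq_mul_rpow_neg (hb : -1 < b) {ψ : ℝ → ℝ}
    (hψ : ContinuousOn ψ (Ioi 0)) {z : ℝ} (hz : 0 ≤ z)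
    (hint : IntervalIntegrable (fun u => ψ u ^ 2 * u ^ (-b)) volume 0 z) :
    IntervalIntegrable ψ volume 0 z := by
  refine ((hint.add (intervalIntegral.intervalIntegrable_rpow' hb)).div_const 2).mono_fun'
    ((hψ.mono fun u hu => ?_).aestronglyMeasurable measurableSet_uIoc) ?_
  · simp only [uIoc_of_le hz] at hu
    exact hu.1
  · rw [uIoc_of_le hz]
    filter_upwards [ae_restrict_mem measurableSet_Ioc] with u hu
    have := two_mul_abs_le_sq_mul_rpow_neg_add_rpow (b := b) (ψ u) hu.1
    simp only [norm_eq_abs]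
    linarith

theorem rpow_div_sq_mul_rpow_neg (D : ℝ) {u : ℝ} (hu : 0 < u) :
    (u ^ b / D) ^ 2 * u ^ (-b) = u ^ b / D ^ 2 := by
  rw [div_pow, div_mul_eq_mul_div, sq, mul_assoc, ← rpow_add hu, add_neg_cancel, rpow_zero,
    mul_one]

theorem rpow_div_add_rpow_div_add_integral (hb : -1 < b) (hc : 0 < c) {z : ℝ} (hz : 0 < z) :
    z ^ b / (c + z ^ (b + 1) / (b + 1)) * z ^ (-b)
      + ∫ u in 0..z, (u ^ b / (c + u ^ (b + 1) / (b + 1))) ^ 2 * u ^ (-b) = c⁻¹ := by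
  rw [integral_congr_Ioo_of_le hz.le fun u hu => rpow_div_sq_mul_rpow_neg _ hu.1,
    integral_rpow_div_add_rpow_div_sq hb hc hz.le, div_mul_eq_mul_div, ← rpow_add hz,
    add_neg_cancel, rpow_zero, one_div]
  ring

theorem exp_neg_integral_rpow_div_add_rpow_div (hb : -1 < b) (hc : 0 < c) {y z : ℝ} (hy : 0 < y)
    (hyz : y ≤ z) :
    exp (-∫ u in y..z, u ^ b / (c + u ^ (b + 1) / (b + 1)))
      = (1 + c⁻¹ * (y ^ (b + 1) / (b + 1))) / (1 + c⁻¹ * (z ^ (b + 1) / (b + 1))) := by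
  rw [integral_rpow_div_add_rpow_div hb hc hy hyz, neg_sub, exp_sub,
    exp_log (add_rpow_div_pos hb hc hy.le), exp_log (add_rpow_div_pos hb hc (hy.le.trans hyz)),
    ← mul_div_mul_left _ _ (inv_ne_zero hc.ne'), mul_add, mul_add, inv_mul_cancel₀ hc.ne']

theorem eq_rpow_div_of_integral_eq (hb : -1 < b) (hc : 0 < c) {ψ : ℝ → ℝ}
    (hψ : ContinuousOn ψ (Ioi 0))
    (hint : ∀ z > 0, IntervalIntegrable (fun u => ψ u ^ 2 * u ^ (-b)) volume 0 z)
    (heq : ∀ z > 0, ψ z * z ^ (-b) + ∫ u in 0..z, ψ u ^ 2 * u ^ (-b) = c⁻¹) {z : ℝ}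
    (hz : 0 < z) :
    ψ z = z ^ b / (c + z ^ (b + 1) / (b + 1)) := by
  set I : ℝ → ℝ := fun t => ∫ u in 0..t, ψ u ^ 2 * u ^ (-b) with hI
  set D : ℝ → ℝ := fun t => c + t ^ (b + 1) / (b + 1) with hD
  have hF : ∀ t > 0, c⁻¹ - I t = ψ t * t ^ (-b) := fun t ht => by linarith [heq t ht]
  have hpq : ∀ t : ℝ, 0 < t → t ^ (-b) * t ^ b = 1 := fun t ht => by
    rw [← rpow_add ht, neg_add_cancel, rpow_zero]
  -- `E` vanishes exactly along the explicit solution, and solves the linear equation `E' = -ψ E`.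
  set E : ℝ → ℝ := fun t => (c⁻¹ - I t) * D t - 1 with hE
  have hf : ContinuousOn (fun u => ψ u ^ 2 * u ^ (-b)) (Ioi 0) :=
    (hψ.pow 2).mul (continuousOn_id.rpow_const fun u hu => Or.inl (ne_of_gt hu))
  have hE' : ∀ t ∈ Ioi 0, HasDerivAt E (-ψ t * E t) t := by
    intro t ht
    refine ((((hasDerivAt_primitive_of_continuousOn hf isOpen_Ioi (hint t ht) ht).const_sub
      c⁻¹).mul (hasDerivAt_add_rpow_div (c := c) (by linarith) ht)).sub_const 1).congr_deriv ?_
    have hFt : c⁻¹ - ∫ u in 0..t, ψ u ^ 2 * u ^ (-b) = ψ t * t ^ (-b) := hF t ht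
    simp only [hE, hI, hD, hFt]
    linear_combination ψ t * hpq t ht
  have hE₀ : Tendsto E (𝓝[>] 0) (𝓝 0) := by
    have hI₀ : Tendsto I (𝓝[>] 0) (𝓝 0) := by
      simpa using tendsto_primitive_nhdsGT hz (hint z hz) left_mem_uIcc
    have hD₀ : Tendsto D (𝓝[>] 0) (𝓝 c) := by
      simpa [zero_rpow (by linarith : b + 1 ≠ 0)] using
        ((continuous_add_rpow_div (b := b) (c := c) (by linarith)).tendsto 0).mono_left
          nhdsWithin_le_nhds
    simpa [hc.ne'] using (((tendsto_const_nhds (x := c⁻¹)).sub hI₀).mul hD₀).sub_const 1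
  have hEz := eq_zero_of_hasDerivAt_eq_mul_of_tendsto_zero hz hψ.neg
    (intervalIntegrable_of_sq_mul_rpow_neg hb hψ hz.le (hint z hz)).neg hE' hE₀
  simp only [hE, hF z hz] at hEz
  rw [eq_div_iff (add_rpow_div_pos hb hc hz.le).ne']
  linear_combination z ^ b * hEz - ψ z * D z * hpq z hz

end Riccati

/-- `φ z = z^b/(Ĵ/σ + z^{b+1}/(b+1))` is the unique continuous solution on
`(0,∞)` of `φ(z) z^{-b} + ∫₀^z φ(u)² u^{-b} du = σ/Ĵ`, and consequently
`exp(−∫_y^z φ) = (1 + σĴ⁻¹ y^{b+1}/(b+1))/(1 + σĴ⁻¹ z^{b+1}/(b+1))` for `0 < y < z`. -/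
theorem upcrossing_scaling_phi (b σ J : ℝ) (hb : -1 < b) (hσ : 0 < σ) (hJ : 0 < J)
    (φ : ℝ → ℝ) (hφ : ∀ z, φ z = z ^ b / (J / σ + z ^ (b + 1) / (b + 1))) :
    (ContinuousOn φ (Set.Ioi 0) ∧
      (∀ z > (0:ℝ), IntegrableOn (fun u => φ u ^ 2 * u ^ (-b)) (Set.Ioo 0 z) volume) ∧
      (∀ z > (0:ℝ), φ z * z ^ (-b) + ∫ u in Set.Ioo (0:ℝ) z, φ u ^ 2 * u ^ (-b) = σ / J)) ∧
    (∀ ψ : ℝ → ℝ, ContinuousOn ψ (Set.Ioi 0) →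
      (∀ z > (0:ℝ), IntegrableOn (fun u => ψ u ^ 2 * u ^ (-b)) (Set.Ioo 0 z) volume) →
      (∀ z > (0:ℝ), ψ z * z ^ (-b) + ∫ u in Set.Ioo (0:ℝ) z, ψ u ^ 2 * u ^ (-b) = σ / J) →
      ∀ z > (0:ℝ), ψ z = φ z) ∧
    (∀ y z : ℝ, 0 < y → y < z →
      Real.exp (-(∫ u in y..z, φ u)) =
        (1 + σ / J * (y ^ (b + 1) / (b + 1))) / (1 + σ / J * (z ^ (b + 1) / (b + 1)))) := by
  have hc : 0 < J / σ := div_pos hJ hσ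
  rw [← inv_div J σ]
  have hIoo : ∀ (f : ℝ → ℝ) {z : ℝ}, 0 < z → ∫ u in Ioo 0 z, f u = ∫ u in 0..z, f u :=
    fun f z hz => by rw [integral_of_le hz.le, integral_Ioc_eq_integral_Ioo]
  have hIoo_int : ∀ (f : ℝ → ℝ) {z : ℝ}, 0 < z →
      (IntegrableOn f (Ioo 0 z) ↔ IntervalIntegrable f volume 0 z) :=
    fun f z hz => (intervalIntegrable_iff_integrableOn_Ioo_of_le hz.le).symm
  obtain rfl : φ = _ := funext hφ
  refine ⟨⟨?_, fun z hz => ?_, fun z hz => ?_⟩, fun ψ hψ hint heq z hz => ?_,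
    fun y z hy hyz => exp_neg_integral_rpow_div_add_rpow_div hb hc hy hyz.le⟩
  · exact continuousOn_rpow_div_add_rpow_div hb hc
  · exact ((hIoo_int _ hz).2 (intervalIntegrable_rpow_div_add_rpow_div_sq hb hc hz.le)).congr_fun
      (fun u hu => (rpow_div_sq_mul_rpow_neg _ hu.1).symm) measurableSet_Ioo
  · rw [hIoo _ hz]
    exact rpow_div_add_rpow_div_add_integral hb hc hz
  · refine eq_rpow_div_of_integral_eq hb hc hψ (fun z hz => (hIoo_int _ hz).1 (hint z hz))
      (fun z hz => ?_) hz
    rw [← hIoo _ hz]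
    exact heq z hz
end

section
/- Let ν̂ be a measure on (0,∞) with 0 < ν̂([x,∞)) < ∞ for all x > 0. Suppose for all 0 < y < z the Laplace transform (ν̂([z,∞))/ν̂([y,∞))) · (ν̂([y,∞)) + σ)/(ν̂([z,∞)) + σ) equals (1 + σ Ĵ^{−1} q(y))/(1 + σ Ĵ^{−1} q(z)) for all σ ≥ 0, where q(x) = x^{b+1}/(b+1), Ĵ = J/(2Γ(b+1)), b > −1, J > 0. Then ν̂([x,∞)) = Ĵ/q(x) = J(b+1)/(2Γ(b+1) x^{b+1}) for all x > 0; equivalently dν̂(x) = (J(b+1)/(2Γ(b+1))) x^{−(b+2)} dx. -/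
open MeasureTheory

/-!
Write `a = ν[y,∞)`, `c = ν[z,∞)`. Clearing denominators, the matching condition is an identity
between two quadratics in `σ`. The `σ²` coefficients give `c q(z) = a q(y)`, so `c ≠ a` because `q`
is strictly increasing; the `σ` coefficients then factor as `(c - a)(Ĵ - a q(y)) = 0`.
-/

theorem mul_eq_of_laplace_ratio_eq {a c p r K : ℝ} (hc : 0 ≤ c) (hK : 0 < K) (hr : 0 ≤ r)
    (hpr : p ≠ r)
    (h : ∀ σ : ℝ, 0 ≤ σ → c / a * ((a + σ) / (c + σ)) = (1 + σ / K * p) / (1 + σ / K * r)) :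
    a * p = K := by
  -- at `σ = 0` the right side is `1`, while the left side would be the junk value `0` if `a = 0`
  have ha : a ≠ 0 := by
    rintro rfl
    simpa using h 0 le_rfl
  have h1 := h 1 zero_le_one
  have h2 := h 2 zero_le_two
  have hd1 : 1 + 1 / K * r ≠ 0 := by positivity
  have hd2 : 1 + 2 / K * r ≠ 0 := by positivity
  have hc1 : c + 1 ≠ 0 := by positivity
  have hc2 : c + 2 ≠ 0 := by positivity
  field_simp at h1 h2
  have hquad : c * r = a * p := by linear_combination (h2 - 2 * h1) / 2
  have hca : c ≠ a := by
    rintro rfl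
    exact hpr (mul_left_cancel₀ ha hquad.symm)
  have hlin : (c - a) * (K - a * p) = 0 := by linear_combination h1 - (a + 1) * hquad
  exact (sub_eq_zero.mp ((mul_eq_zero.mp hlin).resolve_left (sub_ne_zero.mpr hca))).symm

theorem spike_intensity_from_laplace_general (b J : ℝ) (hb : -1 < b) (hJ : 0 < J)
    (ν : Measure ℝ)
    (q : ℝ → ℝ) (hq : ∀ x, q x = x ^ (b + 1) / (b + 1))
    (Jhat : ℝ) (hJhat : Jhat = J / (2 * Real.Gamma (b + 1)))
    (hmatch : ∀ y z σ : ℝ, 0 < y → y < z → 0 ≤ σ →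
      (ν (Set.Ici z)).toReal / (ν (Set.Ici y)).toReal *
          (((ν (Set.Ici y)).toReal + σ) / ((ν (Set.Ici z)).toReal + σ))
        = (1 + σ / Jhat * q y) / (1 + σ / Jhat * q z)) :
    ∀ x > (0:ℝ),
      (ν (Set.Ici x)).toReal = Jhat / q x ∧
      (ν (Set.Ici x)).toReal = J * (b + 1) / (2 * Real.Gamma (b + 1) * x ^ (b + 1)) := by
  intro x hx
  have hb1 : 0 < b + 1 := by linarith
  have hJhat_pos : 0 < Jhat := by rw [hJhat]; have := Real.Gamma_pos_of_pos hb1; positivity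
  have hqx : 0 < q x := by rw [hq]; positivity
  have hq_lt : q x < q (x + 1) := by
    rw [hq, hq]
    exact div_lt_div_of_pos_right (Real.rpow_lt_rpow hx.le (lt_add_one x) hb1) hb1
  have key : (ν (Set.Ici x)).toReal * q x = Jhat :=
    mul_eq_of_laplace_ratio_eq ENNReal.toReal_nonneg hJhat_pos (hqx.trans hq_lt).le hq_lt.ne
      (hmatch x (x + 1) · hx (lt_add_one x))
  have hfirst : (ν (Set.Ici x)).toReal = Jhat / q x := (eq_div_iff hqx.ne').mpr key
  refine ⟨hfirst, ?_⟩
  rw [hfirst, hq, hJhat, div_div_div_eq]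

/-- if the Laplace transforms `(ν[z,∞)/ν[y,∞))(ν[y,∞)+σ)/(ν[z,∞)+σ)`
match `(1 + σJhat⁻¹q(y))/(1 + σJhat⁻¹q(z))` with `q x = x^{b+1}/(b+1)`, `Jhat = J/(2Γ(b+1))`,
for all `0 < y < z` and `σ ≥ 0`, then `ν[x,∞) = Jhat/q(x) = J(b+1)/(2Γ(b+1)x^{b+1})`. -/
theorem spike_intensity_from_laplace (b J : ℝ) (hb : -1 < b) (hJ : 0 < J)
    (ν : Measure ℝ)
    (hfin : ∀ x > (0:ℝ), ν (Set.Ici x) < ⊤) (hpos : ∀ x > (0:ℝ), 0 < ν (Set.Ici x))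
    (q : ℝ → ℝ) (hq : ∀ x, q x = x ^ (b + 1) / (b + 1))
    (Jhat : ℝ) (hJhat : Jhat = J / (2 * Real.Gamma (b + 1)))
    (hmatch : ∀ y z σ : ℝ, 0 < y → y < z → 0 ≤ σ →
      (ν (Set.Ici z)).toReal / (ν (Set.Ici y)).toReal *
          (((ν (Set.Ici y)).toReal + σ) / ((ν (Set.Ici z)).toReal + σ))
        = (1 + σ / Jhat * q y) / (1 + σ / Jhat * q z)) :
    ∀ x > (0:ℝ),
      (ν (Set.Ici x)).toReal = Jhat / q x ∧
      (ν (Set.Ici x)).toReal = J * (b + 1) / (2 * Real.Gamma (b + 1) * x ^ (b + 1)) :=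
  spike_intensity_from_laplace_general b J hb hJ ν q hq Jhat hJhat hmatch
end

section
/- Let b > 0 and ε > 0 and define Z_ε = ∫₀^∞ u^{−4} exp(b/(2u²) − ε/(3u³)) du. Then Z_ε is finite, and as ε → 0⁺ one has the Laplace-type asymptotics Z_ε ∼ √(2πb³) · ε^{−2} · e^{b³/(6ε²)}. Equivalently, after the substitution u = ε/s, Z_ε = ε^{−3} ∫₀^∞ s² exp((bs²/2 − s³/3)/ε²) ds, and this integral is governed by the saddle point at s = b where bs²/2 − s³/3 attains its maximum b³/6 on (0,∞). -/
/-! Substituting `u = ε / s` turns `Z ε` into `ε⁻³ ∫₀^∞ s² e^{φ(s)/ε²} ds` with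
`φ(s) = b s²/2 - s³/3`. Since `φ(b + h) = b³/6 - h² (3b + 2h)/6`, the further substitution
`s = b + ε t` gives `ε e^{b³/(6ε²)} ∫ (b + ε t)₊² e^{-t² (3b + 2εt)/6} dt`. For `|ε| ≤ 1`
the integrand is dominated by `(2b² + 2t²) e^{-b t²/6}`, so by dominated convergence the last
integral tends to `∫ b² e^{-b t²/2} dt = √(2π b³)` as `ε → 0`. -/

open Set Filter MeasureTheory Real Topology

section Substitution

variable {E : Type*} [NormedAddCommGroup E] [NormedSpace ℝ E] {c : ℝ}

lemma image_const_div_Ioi_zero (hc : 0 < c) : (fun s : ℝ => c / s) '' Ioi 0 = Ioi 0 := by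
  refine Subset.antisymm ?_ fun u (hu : 0 < u) =>
    ⟨c / u, div_pos hc hu, div_div_cancel₀ hc.ne'⟩
  rintro _ ⟨s, hs : 0 < s, rfl⟩
  exact div_pos hc hs

lemma injOn_const_div_Ioi_zero (hc : c ≠ 0) : InjOn (fun s : ℝ => c / s) (Ioi 0) :=
  fun _ _ _ _ h => inv_injective (mul_left_cancel₀ hc h)

lemma hasDerivAt_const_div {s : ℝ} (hs : s ≠ 0) :
    HasDerivAt (fun s => c / s) (-(c / s ^ 2)) s := by
  simpa [div_eq_mul_inv] using (hasDerivAt_inv hs).const_mul c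

lemma integrableOn_Ioi_comp_div_iff (f : ℝ → E) (hc : 0 < c) :
    IntegrableOn (fun s => (c / s ^ 2) • f (c / s)) (Ioi 0) ↔ IntegrableOn f (Ioi 0) := by
  have h := integrableOn_image_iff_integrableOn_abs_deriv_smul measurableSet_Ioi
    (fun s (hs : 0 < s) => (hasDerivAt_const_div (c := c) hs.ne').hasDerivWithinAt)
    (injOn_const_div_Ioi_zero hc.ne') f
  rw [image_const_div_Ioi_zero hc] at h
  rw [h]
  refine integrableOn_congr_fun (fun s (hs : 0 < s) => ?_) measurableSet_Ioi
  rw [abs_neg, abs_of_pos (by positivity)]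

lemma integral_Ioi_comp_div (f : ℝ → E) (hc : 0 < c) :
    ∫ s in Ioi 0, (c / s ^ 2) • f (c / s) = ∫ u in Ioi 0, f u := by
  have h := integral_image_eq_integral_abs_deriv_smul measurableSet_Ioi
    (fun s (hs : 0 < s) => (hasDerivAt_const_div (c := c) hs.ne').hasDerivWithinAt)
    (injOn_const_div_Ioi_zero hc.ne') f
  rw [image_const_div_Ioi_zero hc] at h
  rw [h]
  refine setIntegral_congr_fun measurableSet_Ioi (fun s (hs : 0 < s) => ?_)
  rw [abs_neg, abs_of_pos (by positivity)]

lemma integral_comp_add_mul_eq (f : ℝ → E) (a : ℝ) :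
    ∫ t, f (a + c * t) = |c⁻¹| • ∫ s, f s := by
  rw [Measure.integral_comp_mul_left (fun y => f (a + y)), integral_add_left_eq_self]

end Substitution

lemma Integrable.of_comp_add_mul {F : Type*} [NormedAddCommGroup F] {f : ℝ → F} {a c : ℝ}
    (hc : c ≠ 0) (hf : Integrable fun t => f (a + c * t)) : Integrable f := by
  simpa [mul_inv_cancel_left₀ hc] using (hf.comp_mul_left' (inv_ne_zero hc)).comp_add_left (-a)

noncomputable def potential (b s : ℝ) : ℝ := b * s ^ 2 / 2 - s ^ 3 / 3

lemma potential_add (b h : ℝ) :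
    potential b (b + h) = b ^ 3 / 6 - h ^ 2 * (3 * b + 2 * h) / 6 := by
  unfold potential; ring

lemma potential_le {b s : ℝ} (hs : 0 ≤ b + 2 * s) : potential b s ≤ b ^ 3 / 6 := by
  have h := potential_add b (s - b)
  rw [add_sub_cancel] at h
  rw [h, sub_le_self_iff]
  have : 0 ≤ 3 * b + 2 * (s - b) := by linarith
  positivity

/-- The integrand `s² e^{φ(s)/ε²}` in the variable `t = (s - b)/ε`, with the peak value
`e^{b³/(6ε²)}` divided out; the factor `max (b + ε t) 0` restricts it to `s > 0`. -/
noncomputable def rescaledIntegrand (b ε t : ℝ) : ℝ :=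
  max (b + ε * t) 0 ^ 2 * exp (-(t ^ 2 * (3 * b + 2 * ε * t)) / 6)

lemma max_sq_mul_exp_potential (b : ℝ) {ε : ℝ} (hε : ε ≠ 0) (t : ℝ) :
    max (b + ε * t) 0 ^ 2 * exp (potential b (b + ε * t) / ε ^ 2) =
      exp (b ^ 3 / (6 * ε ^ 2)) * rescaledIntegrand b ε t := by
  have h : potential b (b + ε * t) / ε ^ 2 =
      b ^ 3 / (6 * ε ^ 2) + -(t ^ 2 * (3 * b + 2 * ε * t)) / 6 := by
    rw [potential_add]; field_simp; ring
  rw [rescaledIntegrand, h, exp_add]; ring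

lemma rescaledIntegrand_nonneg (b ε t : ℝ) : 0 ≤ rescaledIntegrand b ε t := by
  unfold rescaledIntegrand; positivity

-- Where `b + ε t > 0`, `3 b + 2 ε t = b + 2 (b + ε t) > b`.
lemma rescaledIntegrand_le (b ε t : ℝ) :
    rescaledIntegrand b ε t ≤ (2 * b ^ 2 + 2 * ε ^ 2 * t ^ 2) * exp (-(b / 6) * t ^ 2) := by
  rcases le_or_gt (b + ε * t) 0 with hneg | hpos
  · rw [rescaledIntegrand, max_eq_right hneg, zero_pow two_ne_zero, zero_mul]
    positivity
  · rw [rescaledIntegrand, max_eq_left hpos.le]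
    gcongr
    · nlinarith [sq_nonneg (b - ε * t)]
    · nlinarith [mul_nonneg (sq_nonneg t) hpos.le]

lemma integrable_quadratic_mul_exp_neg_mul_sq {a : ℝ} (ha : 0 < a) (p q : ℝ) :
    Integrable fun t => (p + q * t ^ 2) * exp (-a * t ^ 2) := by
  have h2 : Integrable fun t : ℝ => t ^ 2 * exp (-a * t ^ 2) := by
    simpa using integrable_rpow_mul_exp_neg_mul_sq ha (s := 2) (by norm_num)
  exact ((integrable_exp_neg_mul_sq ha).const_mul p).add (h2.const_mul q) |>.congr
    (.of_forall fun t => by simp only [Pi.add_apply]; ring)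

lemma integrable_rescaledIntegrand {b : ℝ} (hb : 0 < b) (ε : ℝ) :
    Integrable (rescaledIntegrand b ε) :=
  (integrable_quadratic_mul_exp_neg_mul_sq (a := b / 6) (by positivity) _ _).mono'
    (show Continuous (rescaledIntegrand b ε) by
      unfold rescaledIntegrand; fun_prop).aestronglyMeasurable
    (.of_forall fun t => by
      rw [norm_of_nonneg (rescaledIntegrand_nonneg b ε t)]; exact rescaledIntegrand_le b ε t)

lemma integral_rescaledIntegrand_zero {b : ℝ} (hb : 0 < b) :
    ∫ t, rescaledIntegrand b 0 t = √(2 * π * b ^ 3) := by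
  have h : rescaledIntegrand b 0 = fun t => b ^ 2 * exp (-(b / 2) * t ^ 2) := by
    ext t; rw [rescaledIntegrand]; simp only [zero_mul, add_zero, max_eq_left hb.le]; ring_nf
  rw [h, integral_const_mul, integral_gaussian, ← sqrt_sq (sq_nonneg b),
    ← sqrt_mul (by positivity)]
  congr 1
  field_simp

lemma tendsto_integral_rescaledIntegrand {b : ℝ} (hb : 0 < b) :
    Tendsto (fun ε => ∫ t, rescaledIntegrand b ε t) (𝓝[>] 0) (𝓝 √(2 * π * b ^ 3)) := by
  rw [← integral_rescaledIntegrand_zero hb]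
  refine (continuousAt_of_dominated
    (bound := fun t => (2 * b ^ 2 + 2 * t ^ 2) * exp (-(b / 6) * t ^ 2))
    (.of_forall fun ε => (integrable_rescaledIntegrand hb ε).aestronglyMeasurable) ?_
    (integrable_quadratic_mul_exp_neg_mul_sq (a := b / 6) (by positivity) _ _)
    (.of_forall fun t => by unfold rescaledIntegrand; fun_prop)).tendsto.mono_left
      nhdsWithin_le_nhds
  filter_upwards [Icc_mem_nhds (show (-1 : ℝ) < 0 by norm_num) one_pos] with ε hε
  refine .of_forall fun t => ?_
  rw [norm_of_nonneg (rescaledIntegrand_nonneg b ε t)]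
  refine (rescaledIntegrand_le b ε t).trans ?_
  have : ε ^ 2 ≤ 1 := by nlinarith [hε.1, hε.2]
  gcongr
  nlinarith [sq_nonneg t]

lemma integral_sq_mul_exp_potential (b : ℝ) {ε : ℝ} (hε : 0 < ε) :
    ∫ s in Ioi 0, s ^ 2 * exp (potential b s / ε ^ 2) =
      ε * exp (b ^ 3 / (6 * ε ^ 2)) * ∫ t, rescaledIntegrand b ε t := by
  have hcut : ∫ s in Ioi 0, s ^ 2 * exp (potential b s / ε ^ 2) =
      ∫ s, max s 0 ^ 2 * exp (potential b s / ε ^ 2) := by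
    rw [← setIntegral_eq_integral_of_forall_compl_eq_zero (s := Ioi 0)
      (f := fun s => max s 0 ^ 2 * exp (potential b s / ε ^ 2)) fun s (hs : ¬ 0 < s) => by
        rw [max_eq_right (not_lt.1 hs), zero_pow two_ne_zero, zero_mul]]
    exact setIntegral_congr_fun measurableSet_Ioi fun s (hs : 0 < s) => by
      simp only [max_eq_left hs.le]
  have hsub := integral_comp_add_mul_eq
    (fun s => max s 0 ^ 2 * exp (potential b s / ε ^ 2)) b (c := ε)
  simp only [max_sq_mul_exp_potential b hε.ne'] at hsub
  rw [integral_const_mul, abs_inv, abs_of_pos hε, smul_eq_mul] at hsub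
  rw [hcut, mul_assoc, hsub, mul_inv_cancel_left₀ hε.ne']

lemma integrableOn_sq_mul_exp_potential {b : ℝ} (hb : 0 < b) {ε : ℝ} (hε : 0 < ε) :
    IntegrableOn (fun s => s ^ 2 * exp (potential b s / ε ^ 2)) (Ioi 0) := by
  have h : Integrable fun s => max s 0 ^ 2 * exp (potential b s / ε ^ 2) :=
    Integrable.of_comp_add_mul (a := b) hε.ne' <| by
      simpa only [max_sq_mul_exp_potential b hε.ne'] using
        (integrable_rescaledIntegrand hb ε).const_mul (exp (b ^ 3 / (6 * ε ^ 2)))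
  exact h.integrableOn.congr_fun (fun s (hs : 0 < s) => by simp only [max_eq_left hs.le])
    measurableSet_Ioi

noncomputable def stationaryDensity (b ε u : ℝ) : ℝ :=
  (u ^ 4)⁻¹ * exp (b / (2 * u ^ 2) - ε / (3 * u ^ 3))

lemma div_sq_mul_stationaryDensity_div (b : ℝ) {ε s : ℝ} (hε : ε ≠ 0) (hs : s ≠ 0) :
    ε / s ^ 2 * stationaryDensity b ε (ε / s) =
      ε⁻¹ ^ 3 * (s ^ 2 * exp (potential b s / ε ^ 2)) := by
  have h : b / (2 * (ε / s) ^ 2) - ε / (3 * (ε / s) ^ 3) = potential b s / ε ^ 2 := by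
    unfold potential; field_simp
  rw [stationaryDensity, h]
  field_simp

lemma integrableOn_stationaryDensity {b : ℝ} (hb : 0 < b) {ε : ℝ} (hε : 0 < ε) :
    IntegrableOn (stationaryDensity b ε) (Ioi 0) := by
  rw [← integrableOn_Ioi_comp_div_iff _ hε]
  refine IntegrableOn.congr_fun
    ((integrableOn_sq_mul_exp_potential hb hε).const_mul (ε⁻¹ ^ 3)) (fun s (hs : 0 < s) => ?_) measurableSet_Ioi
  rw [smul_eq_mul, div_sq_mul_stationaryDensity_div b hε.ne' hs.ne']

lemma integral_stationaryDensity (b : ℝ) {ε : ℝ} (hε : 0 < ε) :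
    ∫ u in Ioi 0, stationaryDensity b ε u =
      ε⁻¹ ^ 3 * ∫ s in Ioi 0, s ^ 2 * exp (potential b s / ε ^ 2) := by
  rw [← integral_Ioi_comp_div _ hε, ← integral_const_mul]
  exact setIntegral_congr_fun measurableSet_Ioi fun s (hs : 0 < s) => by
    rw [smul_eq_mul, div_sq_mul_stationaryDensity_div b hε.ne' hs.ne']

/-- the partition function `Z ε = ∫₀^∞ u⁻⁴ e^{b/(2u²) − ε/(3u³)} du`
is finite for `ε > 0`, equals `ε⁻³ ∫₀^∞ s² e^{(bs²/2 − s³/3)/ε²} ds` (substitution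
`u = ε/s`), satisfies the Laplace/saddle-point asymptotics
`Z ε ∼ √(2πb³) ε⁻² e^{b³/(6ε²)}` as `ε → 0⁺`, and the exponent `bs²/2 − s³/3`
attains its maximum `b³/6` on `(0,∞)` at the saddle point `s = b`. -/
theorem partition_function_asymptotics (b : ℝ) (hb : 0 < b)
    (Z : ℝ → ℝ)
    (hZ : ∀ ε, Z ε = ∫ u in Set.Ioi (0:ℝ),
      (u ^ 4)⁻¹ * Real.exp (b / (2 * u ^ 2) - ε / (3 * u ^ 3))) :
    (∀ ε > (0:ℝ), IntegrableOn
      (fun u => (u ^ 4)⁻¹ * Real.exp (b / (2 * u ^ 2) - ε / (3 * u ^ 3)))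
      (Set.Ioi 0) volume) ∧
    (∀ ε > (0:ℝ), Z ε = ε⁻¹ ^ 3 *
      ∫ s in Set.Ioi (0:ℝ), s ^ 2 * Real.exp ((b * s ^ 2 / 2 - s ^ 3 / 3) / ε ^ 2)) ∧
    Tendsto (fun ε => Z ε / (Real.sqrt (2 * π * b ^ 3) * ε⁻¹ ^ 2 * Real.exp (b ^ 3 / (6 * ε ^ 2))))
      (nhdsWithin 0 (Set.Ioi 0)) (nhds 1) ∧
    (IsMaxOn (fun s => b * s ^ 2 / 2 - s ^ 3 / 3) (Set.Ioi 0) b ∧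
      b * b ^ 2 / 2 - b ^ 3 / 3 = b ^ 3 / 6) := by
  have hZ_eq (ε : ℝ) (hε : 0 < ε) := (hZ ε).trans (integral_stationaryDensity b hε)
  refine ⟨fun ε => integrableOn_stationaryDensity hb, hZ_eq, ?_,
    fun s (hs : 0 < s) => (potential_le (by linarith)).trans_eq (by ring), by ring⟩
  have hlim := (tendsto_integral_rescaledIntegrand hb).div_const √(2 * π * b ^ 3)
  rw [div_self (by positivity)] at hlim
  refine hlim.congr' ?_
  filter_upwards [self_mem_nhdsWithin] with ε (hε : 0 < ε)
  rw [hZ_eq ε hε, integral_sq_mul_exp_potential b hε]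
  field_simp
end
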